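/- Let E_φ, E_θ : ℝ^m × ℝ^n → ℝ be smooth and (φ₀, θ₀) ∈ ℝ^m × ℝ^n; let φ₁(h) = φ₀ − h∇_φE_φ(φ₀, θ₀) and θ₁(h) = θ₀ − h∇_θE_θ(φ₀, θ₀) be a simultaneous gradient descent step with learning rate h. Define the iteration-dependent modified losses Ẽ_φ(φ, θ) = E_φ(φ, θ) + h( (1/4) ‖∇_φE_φ(φ, θ)‖² + (1/2) ⟨∇_θE_φ(φ, θ), ∇_θE_θ(φ₀, θ₀)⟩ ) and Ẽ_θ(φ, θ) = E_θ(φ, θ) + h( (1/4) ‖∇_θE_θ(φ, θ)‖² + (1/2) ⟨∇_φE_θ(φ, θ), ∇_φE_φ(φ₀, θ₀)⟩ ). Then there exist C > 0 and h₀ > 0 such that for every h ∈ (0, h₀) and every solution (φ, θ) : [0, h] → ℝ^m × ℝ^n of φ′ = −∇_φẼ_φ(φ, θ), θ′ = −∇_θẼ_θ(φ, θ) with (φ(0), θ(0)) = (φ₀, θ₀), one has ‖φ(h) − φ₁(h)‖ ≤ C h³ and ‖θ(h) − θ₁(h)‖ ≤ C h³. -/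

import Mathlib

set_option maxHeartbeats 8000000

open scoped RealInnerProductSpace

/-- Partial gradient with respect to the first player's parameters. -/
noncomputable def grad₁ {m n : ℕ}
    (f : EuclideanSpace ℝ (Fin m) × EuclideanSpace ℝ (Fin n) → ℝ)
    (φ : EuclideanSpace ℝ (Fin m)) (θ : EuclideanSpace ℝ (Fin n)) :
    EuclideanSpace ℝ (Fin m) :=
  gradient (fun x => f (x, θ)) φ

/-- Partial gradient with respect to the second player's parameters. -/
noncomputable def grad₂ {m n : ℕ}
    (f : EuclideanSpace ℝ (Fin m) × EuclideanSpace ℝ (Fin n) → ℝ)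
    (φ : EuclideanSpace ℝ (Fin m)) (θ : EuclideanSpace ℝ (Fin n)) :
    EuclideanSpace ℝ (Fin n) :=
  gradient (fun y => f (φ, y)) θ

/-- The first player's iteration-dependent modified loss. -/
noncomputable def modLossφ {m n : ℕ}
    (Eφ Eθ : EuclideanSpace ℝ (Fin m) × EuclideanSpace ℝ (Fin n) → ℝ)
    (φ₀ : EuclideanSpace ℝ (Fin m)) (θ₀ : EuclideanSpace ℝ (Fin n)) (h : ℝ)
    (φ : EuclideanSpace ℝ (Fin m)) (θ : EuclideanSpace ℝ (Fin n)) : ℝ :=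
  Eφ (φ, θ) + h * ((1 / 4 : ℝ) * ‖grad₁ Eφ φ θ‖ ^ 2
      + (1 / 2 : ℝ) * ⟪grad₂ Eφ φ θ, grad₂ Eθ φ₀ θ₀⟫)

/-- The second player's iteration-dependent modified loss. -/
noncomputable def modLossθ {m n : ℕ}
    (Eφ Eθ : EuclideanSpace ℝ (Fin m) × EuclideanSpace ℝ (Fin n) → ℝ)
    (φ₀ : EuclideanSpace ℝ (Fin m)) (θ₀ : EuclideanSpace ℝ (Fin n)) (h : ℝ)
    (φ : EuclideanSpace ℝ (Fin m)) (θ : EuclideanSpace ℝ (Fin n)) : ℝ :=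
  Eθ (φ, θ) + h * ((1 / 4 : ℝ) * ‖grad₂ Eθ φ θ‖ ^ 2
      + (1 / 2 : ℝ) * ⟪grad₁ Eθ φ θ, grad₁ Eφ φ₀ θ₀⟫)

open Set ContinuousLinearMap

set_option linter.unusedSectionVars false
namespace SimGD

variable {X Y : Type*} [NormedAddCommGroup X] [InnerProductSpace ℝ X]
  [NormedAddCommGroup Y] [InnerProductSpace ℝ Y]
  [FiniteDimensional ℝ X] [FiniteDimensional ℝ Y]

/-- The inverse of `toDual`, as a continuous linear map (finite dimensions). -/
noncomputable def dualIso : (X →L[ℝ] ℝ) →L[ℝ] X :=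
  LinearMap.toContinuousLinearMap
    { toFun := fun μ => (InnerProductSpace.toDual ℝ X).symm μ
      map_add' := by intro a b; simp
      map_smul' := by intro r μ; simp }

@[simp] lemma dualIso_apply (μ : X →L[ℝ] ℝ) :
    dualIso μ = (InnerProductSpace.toDual ℝ X).symm μ := rfl

/-- `μ ↦ (toDual).symm (μ ∘ inl)`, as a continuous linear map. -/
noncomputable def proja : ((X × Y) →L[ℝ] ℝ) →L[ℝ] X :=
  dualIso.comp
    ((ContinuousLinearMap.compL ℝ X (X × Y) ℝ).flip (ContinuousLinearMap.inl ℝ X Y))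

noncomputable def projb : ((X × Y) →L[ℝ] ℝ) →L[ℝ] Y :=
  dualIso.comp
    ((ContinuousLinearMap.compL ℝ Y (X × Y) ℝ).flip (ContinuousLinearMap.inr ℝ X Y))

@[simp] lemma proja_apply (μ : (X × Y) →L[ℝ] ℝ) :
    proja μ = (InnerProductSpace.toDual ℝ X).symm (μ.comp (inl ℝ X Y)) := rfl

@[simp] lemma projb_apply (μ : (X × Y) →L[ℝ] ℝ) :
    projb μ = (InnerProductSpace.toDual ℝ Y).symm (μ.comp (inr ℝ X Y)) := rfl

lemma inner_proja (μ : (X × Y) →L[ℝ] ℝ) (v : X) : ⟪proja μ, v⟫ = μ (v, 0) := by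
  simp [InnerProductSpace.toDual_symm_apply]

lemma inner_projb (μ : (X × Y) →L[ℝ] ℝ) (v : Y) : ⟪projb μ, v⟫ = μ (0, v) := by
  simp [InnerProductSpace.toDual_symm_apply]

variable {f : X × Y → ℝ} {x : X} {y : Y}

lemma hasFDerivAt_slice₁ (hf : DifferentiableAt ℝ f (x, y)) :
    HasFDerivAt (fun u => f (u, y)) ((fderiv ℝ f (x, y)).comp (inl ℝ X Y)) x :=
  hf.hasFDerivAt.comp x (hasFDerivAt_prodMk_left x y)

lemma hasFDerivAt_slice₂ (hf : DifferentiableAt ℝ f (x, y)) :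
    HasFDerivAt (fun v => f (x, v)) ((fderiv ℝ f (x, y)).comp (inr ℝ X Y)) y :=
  hf.hasFDerivAt.comp y (hasFDerivAt_prodMk_right x y)

lemma gradient_slice₁ (hf : DifferentiableAt ℝ f (x, y)) :
    gradient (fun u => f (u, y)) x = proja (fderiv ℝ f (x, y)) := by
  rw [gradient, (hasFDerivAt_slice₁ hf).fderiv, proja_apply]

lemma gradient_slice₂ (hf : DifferentiableAt ℝ f (x, y)) :
    gradient (fun v => f (x, v)) y = projb (fderiv ℝ f (x, y)) := by
  rw [gradient, (hasFDerivAt_slice₂ hf).fderiv, projb_apply]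


section Calc

variable (A : X × Y → ℝ)

/-- grad₁ of `A`, as a function on the product space. -/
noncomputable def GA : X × Y → X := fun p => proja (fderiv ℝ A p)

/-- grad₂ of `A`, as a function on the product space. -/
noncomputable def GB : X × Y → Y := fun p => projb (fderiv ℝ A p)

/-- The correction term in the first player's modified loss. -/
noncomputable def corr (k : Y) : X × Y → ℝ :=
  fun p => (1 / 4 : ℝ) * ⟪GA A p, GA A p⟫ + (1 / 2 : ℝ) * ⟪GB A p, k⟫

/-- The correction term in the second player's modified loss. -/
noncomputable def corr₂ (g : X) : X × Y → ℝ :=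
  fun p => (1 / 4 : ℝ) * ⟪GB A p, GB A p⟫ + (1 / 2 : ℝ) * ⟪GA A p, g⟫

variable {A}

lemma contDiff_GA (hA : ContDiff ℝ (⊤ : ℕ∞) A) : ContDiff ℝ (⊤ : ℕ∞) (GA A) := by
  show ContDiff ℝ (⊤ : ℕ∞) fun p => proja (fderiv ℝ A p)
  exact proja.contDiff.comp (hA.fderiv_right (m := (⊤ : ℕ∞)) (by simp))

lemma contDiff_GB (hA : ContDiff ℝ (⊤ : ℕ∞) A) : ContDiff ℝ (⊤ : ℕ∞) (GB A) := by
  show ContDiff ℝ (⊤ : ℕ∞) fun p => projb (fderiv ℝ A p)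
  exact projb.contDiff.comp (hA.fderiv_right (m := (⊤ : ℕ∞)) (by simp))

lemma contDiff_corr (hA : ContDiff ℝ (⊤ : ℕ∞) A) (k : Y) : ContDiff ℝ (⊤ : ℕ∞) (corr A k) :=
  ((contDiff_const.mul ((contDiff_GA hA).inner ℝ (contDiff_GA hA))).add
    (contDiff_const.mul ((contDiff_GB hA).inner ℝ contDiff_const)))

lemma contDiff_corr₂ (hA : ContDiff ℝ (⊤ : ℕ∞) A) (g : X) : ContDiff ℝ (⊤ : ℕ∞) (corr₂ A g) :=
  ((contDiff_const.mul ((contDiff_GB hA).inner ℝ (contDiff_GB hA))).add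
    (contDiff_const.mul ((contDiff_GA hA).inner ℝ contDiff_const)))

lemma hasFDerivAt_fderiv (hA : ContDiff ℝ (⊤ : ℕ∞) A) (p : X × Y) :
    HasFDerivAt (fderiv ℝ A) (fderiv ℝ (fderiv ℝ A) p) p :=
  (((hA.fderiv_right (m := (⊤ : ℕ∞)) (by simp)).differentiable (by simp)) p).hasFDerivAt

lemma hasFDerivAt_GA (hA : ContDiff ℝ (⊤ : ℕ∞) A) (p : X × Y) :
    HasFDerivAt (GA A) (proja.comp (fderiv ℝ (fderiv ℝ A) p)) p := by
  show HasFDerivAt (fun p => proja (fderiv ℝ A p)) _ p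
  have h0 := (proja (X := X) (Y := Y)).hasFDerivAt (x := fderiv ℝ A p)
  have h1 : HasFDerivAt (fun μ : X × Y →L[ℝ] ℝ => proja μ) proja (fderiv ℝ A p) := h0
  have h2 : HasFDerivAt (fun q : X × Y => (fderiv ℝ A q : X × Y →L[ℝ] ℝ))
      (fderiv ℝ (fderiv ℝ A) p) p := hasFDerivAt_fderiv hA p
  have := HasFDerivAt.comp (E := X × Y) (F := X × Y →L[ℝ] ℝ) (G := X) (𝕜 := ℝ) p h1 h2
  exact this

lemma hasFDerivAt_GB (hA : ContDiff ℝ (⊤ : ℕ∞) A) (p : X × Y) :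
    HasFDerivAt (GB A) (projb.comp (fderiv ℝ (fderiv ℝ A) p)) p := by
  show HasFDerivAt (fun p => projb (fderiv ℝ A p)) _ p
  have h0 := (projb (X := X) (Y := Y)).hasFDerivAt (x := fderiv ℝ A p)
  have h1 : HasFDerivAt (fun μ : X × Y →L[ℝ] ℝ => projb μ) projb (fderiv ℝ A p) := h0
  have h2 : HasFDerivAt (fun q : X × Y => (fderiv ℝ A q : X × Y →L[ℝ] ℝ))
      (fderiv ℝ (fderiv ℝ A) p) p := hasFDerivAt_fderiv hA p
  have := HasFDerivAt.comp (E := X × Y) (F := X × Y →L[ℝ] ℝ) (G := Y) (𝕜 := ℝ) p h1 h2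
  exact this

lemma fderiv_corr_apply (hA : ContDiff ℝ (⊤ : ℕ∞) A) (k : Y) (p : X × Y) (q : X × Y) :
    fderiv ℝ (corr A k) p q
      = (1 / 2 : ℝ) * (fderiv ℝ (fderiv ℝ A) p q (GA A p, k)) := by
  have h1 : HasFDerivAt (fun p' => ⟪GA A p', GA A p'⟫)
      ((fderivInnerCLM ℝ (GA A p, GA A p)).comp
        ((proja.comp (fderiv ℝ (fderiv ℝ A) p)).prod
          (proja.comp (fderiv ℝ (fderiv ℝ A) p)))) p :=
    (hasFDerivAt_GA hA p).inner ℝ (hasFDerivAt_GA hA p)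
  have h2 : HasFDerivAt (fun p' => ⟪GB A p', k⟫)
      ((fderivInnerCLM ℝ (GB A p, k)).comp
        ((projb.comp (fderiv ℝ (fderiv ℝ A) p)).prod 0)) p :=
    (hasFDerivAt_GB hA p).inner ℝ (hasFDerivAt_const k p)
  have hc : HasFDerivAt (corr A k)
      (((1 / 4 : ℝ) • ((fderivInnerCLM ℝ (GA A p, GA A p)).comp
        ((proja.comp (fderiv ℝ (fderiv ℝ A) p)).prod
          (proja.comp (fderiv ℝ (fderiv ℝ A) p))))) +
       ((1 / 2 : ℝ) • ((fderivInnerCLM ℝ (GB A p, k)).comp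
        ((projb.comp (fderiv ℝ (fderiv ℝ A) p)).prod 0)))) p :=
    (h1.const_mul (1 / 4 : ℝ)).add (h2.const_mul (1 / 2 : ℝ))
  rw [hc.fderiv]
  have e1 : ⟪GA A p, proja (fderiv ℝ (fderiv ℝ A) p q)⟫
      = fderiv ℝ (fderiv ℝ A) p q (GA A p, 0) := by
    rw [real_inner_comm, inner_proja]
  have e2 : ⟪projb (fderiv ℝ (fderiv ℝ A) p q), k⟫
      = fderiv ℝ (fderiv ℝ A) p q (0, k) := inner_projb _ _
  have e3 : (fderiv ℝ (fderiv ℝ A) p q) (GA A p, 0) + (fderiv ℝ (fderiv ℝ A) p q) (0, k)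
      = fderiv ℝ (fderiv ℝ A) p q (GA A p, k) := by
    rw [← ContinuousLinearMap.map_add]
    norm_num
  simp only [ContinuousLinearMap.add_apply, ContinuousLinearMap.coe_smul', Pi.smul_apply,
    ContinuousLinearMap.coe_comp', Function.comp_apply, ContinuousLinearMap.prod_apply,
    fderivInnerCLM_apply, ContinuousLinearMap.zero_apply, smul_eq_mul, inner_zero_right]
  have e1' : ⟪proja ((fderiv ℝ (fderiv ℝ A) p) q), GA A p⟫
      = fderiv ℝ (fderiv ℝ A) p q (GA A p, 0) := inner_proja _ _
  rw [e1, e1', e2]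
  linarith [e3]

/-- The key cancellation identity: the gradient of the correction term equals half of
the second-derivative term appearing in the Taylor expansion of the flow. -/
lemma key_identity (hA : ContDiff ℝ (⊤ : ℕ∞) A) (k : Y) (p : X × Y) :
    proja (fderiv ℝ (corr A k) p)
      = (1 / 2 : ℝ) • proja ((fderiv ℝ (fderiv ℝ A) p) (GA A p, k)) := by
  have hsymm : IsSymmSndFDerivAt ℝ A p := hA.contDiffAt.isSymmSndFDerivAt (by rw [minSmoothness_of_isRCLikeNormedField]; exact WithTop.coe_le_coe.mpr (le_top : (2 : ℕ∞) ≤ ⊤))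
  apply ext_inner_right ℝ
  intro v
  rw [inner_proja, fderiv_corr_apply hA, hsymm.eq, real_inner_smul_left, inner_proja]


lemma gradient_mod₁ (hA : ContDiff ℝ (⊤ : ℕ∞) A) (k : Y) (h : ℝ) (x : X) (y : Y) :
    gradient (fun u => A (u, y) + h * ((1 / 4 : ℝ) * ‖gradient (fun u' => A (u', y)) u‖ ^ 2
        + (1 / 2 : ℝ) * ⟪gradient (fun v => A (u, v)) y, k⟫)) x
      = GA A (x, y) + h • proja (fderiv ℝ (corr A k) (x, y)) := by
  have hfun : (fun u => A (u, y) + h * ((1 / 4 : ℝ) * ‖gradient (fun u' => A (u', y)) u‖ ^ 2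
        + (1 / 2 : ℝ) * ⟪gradient (fun v => A (u, v)) y, k⟫))
      = fun u => A (u, y) + h * corr A k (u, y) := by
    funext u
    have d : DifferentiableAt ℝ A (u, y) := (hA.differentiable (by simp)) _
    rw [gradient_slice₁ d, gradient_slice₂ d]
    simp only [corr, GA, GB]
    rw [real_inner_self_eq_norm_sq]
  rw [hfun]
  have dA : DifferentiableAt ℝ A (x, y) := (hA.differentiable (by simp)) _
  have dC : DifferentiableAt ℝ (corr A k) (x, y) :=
    ((contDiff_corr hA k).differentiable (by simp)) _
  have hs : HasFDerivAt (fun u => A (u, y) + h * corr A k (u, y))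
      (((fderiv ℝ A (x, y)).comp (inl ℝ X Y))
        + h • ((fderiv ℝ (corr A k) (x, y)).comp (inl ℝ X Y))) x :=
    (hasFDerivAt_slice₁ dA).add ((hasFDerivAt_slice₁ dC).const_mul h)
  apply ext_inner_right ℝ
  intro v
  rw [gradient, hs.fderiv, InnerProductSpace.toDual_symm_apply, inner_add_left,
    real_inner_smul_left]
  simp only [GA]
  rw [inner_proja, inner_proja]
  simp [smul_eq_mul]

lemma gradient_mod₂ (hB : ContDiff ℝ (⊤ : ℕ∞) A) (g : X) (h : ℝ) (x : X) (y : Y) :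
    gradient (fun v => A (x, v) + h * ((1 / 4 : ℝ) * ‖gradient (fun v' => A (x, v')) v‖ ^ 2
        + (1 / 2 : ℝ) * ⟪gradient (fun u => A (u, v)) x, g⟫)) y
      = GB A (x, y) + h • projb (fderiv ℝ (corr₂ A g) (x, y)) := by
  have hfun : (fun v => A (x, v) + h * ((1 / 4 : ℝ) * ‖gradient (fun v' => A (x, v')) v‖ ^ 2
        + (1 / 2 : ℝ) * ⟪gradient (fun u => A (u, v)) x, g⟫))
      = fun v => A (x, v) + h * corr₂ A g (x, v) := by
    funext v
    have d : DifferentiableAt ℝ A (x, v) := (hB.differentiable (by simp)) _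
    rw [gradient_slice₁ d, gradient_slice₂ d]
    simp only [corr₂, GA, GB]
    rw [real_inner_self_eq_norm_sq]
  rw [hfun]
  have dA : DifferentiableAt ℝ A (x, y) := (hB.differentiable (by simp)) _
  have dC : DifferentiableAt ℝ (corr₂ A g) (x, y) :=
    ((contDiff_corr₂ hB g).differentiable (by simp)) _
  have hs : HasFDerivAt (fun v => A (x, v) + h * corr₂ A g (x, v))
      (((fderiv ℝ A (x, y)).comp (inr ℝ X Y))
        + h • ((fderiv ℝ (corr₂ A g) (x, y)).comp (inr ℝ X Y))) y :=
    (hasFDerivAt_slice₂ dA).add ((hasFDerivAt_slice₂ dC).const_mul h)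
  apply ext_inner_right ℝ
  intro v
  rw [gradient, hs.fderiv, InnerProductSpace.toDual_symm_apply, inner_add_left,
    real_inner_smul_left]
  simp only [GB]
  rw [inner_projb, inner_projb]
  simp [smul_eq_mul]

end Calc

section Confine

/-- Bootstrap confinement estimate: as long as the velocity is bounded by `M - 1`
whenever the trajectory is in the unit ball, the trajectory stays `M*t`-close to its
starting point on `[0, h]` (for `M*h ≤ 1/2`). -/
lemma confine {x : ℝ → X} {y : ℝ → Y} {x₀ : X} {y₀ : Y} {v1 : ℝ → X} {v2 : ℝ → Y}
    {h M : ℝ} (hh : 0 < h) (hM : 1 ≤ M) (hMh : M * h ≤ 1 / 2)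
    (hx0 : x 0 = x₀) (hy0 : y 0 = y₀)
    (hx' : ∀ t ∈ Icc (0 : ℝ) h, HasDerivAt x (v1 t) t)
    (hy' : ∀ t ∈ Icc (0 : ℝ) h, HasDerivAt y (v2 t) t)
    (hbound : ∀ t ∈ Icc (0 : ℝ) h, ‖x t - x₀‖ ≤ 1 → ‖y t - y₀‖ ≤ 1 →
      ‖v1 t‖ ≤ M - 1 ∧ ‖v2 t‖ ≤ M - 1) :
    ∀ t ∈ Icc (0 : ℝ) h, ‖x t - x₀‖ ≤ M * t ∧ ‖y t - y₀‖ ≤ M * t := by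
  set SS : Set ℝ := {t | t ∈ Icc (0 : ℝ) h ∧
    ∀ s ∈ Icc (0 : ℝ) t, ‖x s - x₀‖ ≤ M * s ∧ ‖y s - y₀‖ ≤ M * s} with hSSdef
  have hSS0 : (0 : ℝ) ∈ SS := by
    refine ⟨⟨le_refl 0, hh.le⟩, ?_⟩
    intro s hs
    have : s = 0 := le_antisymm hs.2 hs.1
    subst this
    simp [hx0, hy0]
  have hSSne : SS.Nonempty := ⟨0, hSS0⟩
  have hSSb : BddAbove SS := ⟨h, fun t ht => ht.1.2⟩
  set T := sSup SS with hTdef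
  have hT0 : 0 ≤ T := le_csSup hSSb hSS0
  have hTh : T ≤ h := csSup_le hSSne (fun t ht => ht.1.2)
  have hxc : ∀ t ∈ Icc (0 : ℝ) h, ContinuousAt x t := fun t ht => (hx' t ht).continuousAt
  have hyc : ∀ t ∈ Icc (0 : ℝ) h, ContinuousAt y t := fun t ht => (hy' t ht).continuousAt
  have hbelow : ∀ s, 0 ≤ s → s < T → ‖x s - x₀‖ ≤ M * s ∧ ‖y s - y₀‖ ≤ M * s := by
    intro s hs0 hsT
    obtain ⟨t', ht', hst'⟩ := exists_lt_of_lt_csSup hSSne hsT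
    exact ht'.2 s ⟨hs0, hst'.le⟩
  have hTbound : ‖x T - x₀‖ ≤ M * T ∧ ‖y T - y₀‖ ≤ M * T := by
    rcases eq_or_lt_of_le hT0 with h0 | hpos
    · rw [← h0]
      simp [hx0, hy0]
    · have hclos : T ∈ closure (Ico (0 : ℝ) T) := by
        rw [closure_Ico hpos.ne]
        exact ⟨hT0, le_rfl⟩
      haveI hnb : (nhdsWithin T (Ico (0 : ℝ) T)).NeBot :=
        mem_closure_iff_nhdsWithin_neBot.1 hclos
      constructor
      · have c1 : ContinuousAt (fun s => ‖x s - x₀‖ - M * s) T :=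
          (((hxc T ⟨hT0, hTh⟩).sub continuousAt_const).norm).sub
            (continuousAt_const.mul continuousAt_id)
        have hle : ‖x T - x₀‖ - M * T ≤ 0 := by
          refine le_of_tendsto (c1.continuousWithinAt (s := Ico (0:ℝ) T)) ?_
          filter_upwards [self_mem_nhdsWithin] with s hs
          have := (hbelow s hs.1 hs.2).1
          linarith
        linarith
      · have c1 : ContinuousAt (fun s => ‖y s - y₀‖ - M * s) T :=
          (((hyc T ⟨hT0, hTh⟩).sub continuousAt_const).norm).sub
            (continuousAt_const.mul continuousAt_id)
        have hle : ‖y T - y₀‖ - M * T ≤ 0 := by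
          refine le_of_tendsto (c1.continuousWithinAt (s := Ico (0:ℝ) T)) ?_
          filter_upwards [self_mem_nhdsWithin] with s hs
          have := (hbelow s hs.1 hs.2).2
          linarith
        linarith
  have hTSS : T ∈ SS := by
    refine ⟨⟨hT0, hTh⟩, ?_⟩
    intro s hs
    rcases lt_or_eq_of_le hs.2 with hlt | heq
    · exact hbelow s hs.1 hlt
    · rw [heq]
      exact hTbound
  have hTeqh : T = h := by
    by_contra hne
    have hTlt : T < h := lt_of_le_of_ne hTh hne
    obtain ⟨δ₁, hδ₁, hxδ⟩ := Metric.continuousAt_iff.1 (hxc T ⟨hT0, hTh⟩) (1/4) (by norm_num)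
    obtain ⟨δ₂, hδ₂, hyδ⟩ := Metric.continuousAt_iff.1 (hyc T ⟨hT0, hTh⟩) (1/4) (by norm_num)
    set δ := min δ₁ δ₂ with hδdef
    have hδpos : 0 < δ := lt_min hδ₁ hδ₂
    set T' := min (T + δ/2) h with hT'def
    have hTT' : T < T' := lt_min (by linarith) hTlt
    have hT'h : T' ≤ h := min_le_right _ _
    have hT'0 : 0 ≤ T' := le_trans hT0 hTT'.le
    -- on [0, T'] the trajectory remains in the unit ball
    have hQ : ∀ s ∈ Icc (0 : ℝ) T', ‖x s - x₀‖ ≤ 1 ∧ ‖y s - y₀‖ ≤ 1 := by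
      intro s hs
      by_cases hsT : s ≤ T
      · have := hTSS.2 s ⟨hs.1, hsT⟩
        have hsh : s ≤ h := le_trans hs.2 hT'h
        constructor
        · calc ‖x s - x₀‖ ≤ M * s := this.1
            _ ≤ M * h := by nlinarith
            _ ≤ 1 := le_trans hMh (by norm_num)
        · calc ‖y s - y₀‖ ≤ M * s := this.2
            _ ≤ M * h := by nlinarith
            _ ≤ 1 := le_trans hMh (by norm_num)
      · push_neg at hsT
        have hdist : dist s T < δ := by
          rw [Real.dist_eq, abs_of_pos (by linarith)]
          have : s ≤ T + δ/2 := le_trans hs.2 (min_le_left _ _)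
          linarith
        have hx14 : dist (x s) (x T) < 1/4 := hxδ (lt_of_lt_of_le hdist (min_le_left _ _))
        have hy14 : dist (y s) (y T) < 1/4 := hyδ (lt_of_lt_of_le hdist (min_le_right _ _))
        have hMT : M * T ≤ 1/2 := by nlinarith
        constructor
        · have : ‖x s - x₀‖ ≤ ‖x s - x T‖ + ‖x T - x₀‖ := norm_sub_le_norm_sub_add_norm_sub _ _ _
          rw [← dist_eq_norm (x s) (x T)] at this
          linarith [hTbound.1]
        · have : ‖y s - y₀‖ ≤ ‖y s - y T‖ + ‖y T - y₀‖ := norm_sub_le_norm_sub_add_norm_sub _ _ _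
          rw [← dist_eq_norm (y s) (y T)] at this
          linarith [hTbound.2]
    -- derivative bound and MVT on [0, T']
    have hxb : ∀ s ∈ Icc (0 : ℝ) T', ‖x s - x₀‖ ≤ (M - 1) * s := by
      intro s hs
      have := (convex_Icc (0 : ℝ) T').norm_image_sub_le_of_norm_hasDerivWithin_le
        (f := x) (f' := v1) (C := M - 1)
        (fun u hu => (hx' u ⟨hu.1, le_trans hu.2 hT'h⟩).hasDerivWithinAt)
        (fun u hu => (hbound u ⟨hu.1, le_trans hu.2 hT'h⟩ (hQ u hu).1 (hQ u hu).2).1)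
        ⟨le_refl 0, hT'0⟩ hs
      rw [hx0] at this
      calc ‖x s - x₀‖ ≤ (M - 1) * ‖s - 0‖ := this
        _ = (M - 1) * s := by rw [sub_zero, Real.norm_eq_abs, abs_of_nonneg hs.1]
    have hyb : ∀ s ∈ Icc (0 : ℝ) T', ‖y s - y₀‖ ≤ (M - 1) * s := by
      intro s hs
      have := (convex_Icc (0 : ℝ) T').norm_image_sub_le_of_norm_hasDerivWithin_le
        (f := y) (f' := v2) (C := M - 1)
        (fun u hu => (hy' u ⟨hu.1, le_trans hu.2 hT'h⟩).hasDerivWithinAt)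
        (fun u hu => (hbound u ⟨hu.1, le_trans hu.2 hT'h⟩ (hQ u hu).1 (hQ u hu).2).2)
        ⟨le_refl 0, hT'0⟩ hs
      rw [hy0] at this
      calc ‖y s - y₀‖ ≤ (M - 1) * ‖s - 0‖ := this
        _ = (M - 1) * s := by rw [sub_zero, Real.norm_eq_abs, abs_of_nonneg hs.1]
    have hT'SS : T' ∈ SS := by
      refine ⟨⟨hT'0, hT'h⟩, ?_⟩
      intro s hs
      refine ⟨le_trans (hxb s hs) ?_, le_trans (hyb s hs) ?_⟩ <;> nlinarith [hs.1]
    have : T' ≤ T := le_csSup hSSb hT'SS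
    linarith
  intro t ht
  exact hTSS.2 t ⟨ht.1, by rw [hTeqh]; exact ht.2⟩

end Confine

section Master

/-- Master estimate for one player of the game, in abstract form. -/
theorem master (A B : X × Y → ℝ) (hA : ContDiff ℝ (⊤ : ℕ∞) A) (hB : ContDiff ℝ (⊤ : ℕ∞) B)
    (x₀ : X) (y₀ : Y) :
    ∃ C > (0 : ℝ), ∃ h₀ > (0 : ℝ), ∀ h ∈ Set.Ioo (0 : ℝ) h₀,
      ∀ (x : ℝ → X) (y : ℝ → Y), x 0 = x₀ → y 0 = y₀ →
      (∀ t ∈ Icc (0 : ℝ) h, HasDerivAt x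
        (-(gradient (fun u => A (u, y t)
          + h * ((1 / 4 : ℝ) * ‖gradient (fun u' => A (u', y t)) u‖ ^ 2
            + (1 / 2 : ℝ) * ⟪gradient (fun v => A (u, v)) (y t),
                gradient (fun v => B (x₀, v)) y₀⟫)) (x t))) t) →
      (∀ t ∈ Icc (0 : ℝ) h, HasDerivAt y
        (-(gradient (fun v => B (x t, v)
          + h * ((1 / 4 : ℝ) * ‖gradient (fun v' => B (x t, v')) v‖ ^ 2
            + (1 / 2 : ℝ) * ⟪gradient (fun u => B (u, v)) (x t),
                gradient (fun u => A (u, y₀)) x₀⟫)) (y t))) t) →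
      ‖x h - (x₀ - h • gradient (fun u => A (u, y₀)) x₀)‖ ≤ C * h ^ 3 := by
  classical
  set g : X := GA A (x₀, y₀) with hgdef
  set k : Y := GB B (x₀, y₀) with hkdef
  have hgeq : gradient (fun u => A (u, y₀)) x₀ = g :=
    gradient_slice₁ ((hA.differentiable (by simp)) _)
  have hkeq : gradient (fun v => B (x₀, v)) y₀ = k :=
    gradient_slice₂ ((hB.differentiable (by simp)) _)
  -- the correction vector fields
  set CC : X × Y → X := fun p => proja (fderiv ℝ (corr A k) p) with hCCdef
  set CB : X × Y → Y := fun p => projb (fderiv ℝ (corr₂ B g) p) with hCBdef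
  have hCC : ContDiff ℝ (⊤ : ℕ∞) CC := by
    rw [hCCdef]
    exact proja.contDiff.comp ((contDiff_corr hA k).fderiv_right (m := (⊤ : ℕ∞)) (by simp))
  have hCB : ContDiff ℝ (⊤ : ℕ∞) CB := by
    rw [hCBdef]
    exact projb.contDiff.comp ((contDiff_corr₂ hB g).fderiv_right (m := (⊤ : ℕ∞)) (by simp))
  -- the full modified vector fields, as functions of (h, p)
  set V1 : ℝ × (X × Y) → X := fun q => -(GA A q.2 + q.1 • CC q.2) with hV1def
  set V2 : ℝ × (X × Y) → Y := fun q => -(GB B q.2 + q.1 • CB q.2) with hV2def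
  have hV1 : ContDiff ℝ (⊤ : ℕ∞) V1 :=
    (((contDiff_GA hA).comp contDiff_snd).add
      (contDiff_fst.smul (hCC.comp contDiff_snd))).neg
  have hV2 : ContDiff ℝ (⊤ : ℕ∞) V2 :=
    (((contDiff_GB hB).comp contDiff_snd).add
      (contDiff_fst.smul (hCB.comp contDiff_snd))).neg
  -- the second-derivative field along the flow
  set K1 : ℝ × (X × Y) → X :=
    fun q => -((fderiv ℝ (GA A) q.2 + q.1 • fderiv ℝ CC q.2) (V1 q, V2 q)) with hK1def
  have hK1 : ContDiff ℝ (⊤ : ℕ∞) K1 := by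
    have hDGA : ContDiff ℝ (⊤ : ℕ∞) (fun q : ℝ × (X × Y) => fderiv ℝ (GA A) q.2) :=
      ((contDiff_GA hA).fderiv_right (by simp)).comp contDiff_snd
    have hDCC : ContDiff ℝ (⊤ : ℕ∞) (fun q : ℝ × (X × Y) => fderiv ℝ CC q.2) :=
      (hCC.fderiv_right (by simp)).comp contDiff_snd
    haveI : IsBoundedSMul ℝ (X × Y →L[ℝ] X) := @NormedSpace.toIsBoundedSMul ℝ (X × Y →L[ℝ] X) _ _ _
    exact ((hDGA.add (contDiff_fst.smul hDCC)).clm_apply (hV1.prodMk hV2)).neg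
  -- compact region and bounds
  set Q : Set (X × Y) := Metric.closedBall x₀ 1 ×ˢ Metric.closedBall y₀ 1 with hQdef
  set S : Set (ℝ × (X × Y)) := Icc (0 : ℝ) 1 ×ˢ Q with hSdef
  have hScomp : IsCompact S :=
    (isCompact_Icc).prod ((isCompact_closedBall x₀ 1).prod (isCompact_closedBall y₀ 1))
  have hSconv : Convex ℝ S :=
    (convex_Icc _ _).prod ((convex_closedBall _ _).prod (convex_closedBall _ _))
  obtain ⟨M₀, hM₀⟩ := hScomp.exists_bound_of_continuousOn
    ((hV1.continuous.prodMk hV2.continuous)).continuousOn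
  set M : ℝ := max M₀ 0 + 1 with hMdef
  have hM1 : (1 : ℝ) ≤ M := by
    have := le_max_right M₀ 0
    linarith
  have hMpos : (0 : ℝ) < M := lt_of_lt_of_le one_pos hM1
  have hVbound : ∀ q ∈ S, ‖V1 q‖ ≤ M - 1 ∧ ‖V2 q‖ ≤ M - 1 := by
    intro q hq
    have h1 := hM₀ q hq
    have h2 : ‖V1 q‖ ≤ ‖(V1 q, V2 q)‖ := by
      rw [Prod.norm_def]; exact le_max_left _ _
    have h3 : ‖V2 q‖ ≤ ‖(V1 q, V2 q)‖ := by
      rw [Prod.norm_def]; exact le_max_right _ _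
    have h4 : M₀ ≤ M - 1 := by
      have := le_max_left M₀ 0
      simp only [hMdef]
      linarith
    exact ⟨le_trans h2 (le_trans h1 h4), le_trans h3 (le_trans h1 h4)⟩
  obtain ⟨L₀, hL₀⟩ := hScomp.exists_bound_of_continuousOn
    ((hK1.continuous_fderiv (by simp)).continuousOn)
  set L : ℝ := max L₀ 0 with hLdef
  have hLnn : (0 : ℝ) ≤ L := le_max_right _ _
  have hKlip : ∀ q1 ∈ S, ∀ q2 ∈ S, ‖K1 q1 - K1 q2‖ ≤ L * ‖q1 - q2‖ := by
    intro q1 h1 q2 h2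
    exact hSconv.norm_image_sub_le_of_norm_hasFDerivWithin_le
      (fun q _ => ((hK1.differentiable (by simp)) q).hasFDerivAt.hasFDerivWithinAt)
      (fun q hq => le_trans (hL₀ q hq) (le_max_left _ _)) h2 h1
  -- the key cancellation at the base point
  have hDGgk : (fderiv ℝ (GA A) (x₀, y₀)) (g, k) = (2 : ℝ) • CC (x₀, y₀) := by
    rw [(hasFDerivAt_GA hA ((x₀, y₀) : X × Y)).fderiv]
    have h2 := key_identity hA k (x₀, y₀)
    have hCCapp : CC (x₀, y₀) = proja (fderiv ℝ (corr A k) (x₀, y₀)) := rfl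
    rw [ContinuousLinearMap.comp_apply, hCCapp, h2, smul_smul, ← hgdef]
    norm_num
  -- the constant controlling `r - 2w`
  set C₂ : ℝ := ‖fderiv ℝ (GA A) (x₀, y₀)‖ * ‖((CC (x₀, y₀), CB (x₀, y₀)) : X × Y)‖
    + ‖fderiv ℝ CC (x₀, y₀)‖
        * (‖((g, k) : X × Y)‖ + ‖((CC (x₀, y₀), CB (x₀, y₀)) : X × Y)‖) with hC₂def
  have hC₂nn : (0 : ℝ) ≤ C₂ := by positivity
  refine ⟨L * M + C₂ / 2 + 1, by nlinarith, min 1 (1 / (2 * M)), by positivity, ?_⟩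
  intro h hh x y hx0 hy0 hx' hy'
  have hh1 : h ≤ 1 := le_of_lt (lt_of_lt_of_le hh.2 (min_le_left _ _))
  have hMh : M * h ≤ 1 / 2 := by
    have hle : h ≤ 1 / (2 * M) := le_of_lt (lt_of_lt_of_le hh.2 (min_le_right _ _))
    have h2M : (0 : ℝ) < 2 * M := by linarith
    calc M * h ≤ M * (1 / (2 * M)) := by nlinarith
      _ = 1 / 2 := by field_simp
  -- identify the derivatives of the solutions with the modified vector fields
  have hx'' : ∀ t ∈ Icc (0 : ℝ) h, HasDerivAt x (V1 (h, (x t, y t))) t := by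
    intro t ht
    have hd := hx' t ht
    simp only [hkeq] at hd
    rw [gradient_mod₁ hA k h (x t) (y t)] at hd
    exact hd
  have hy'' : ∀ t ∈ Icc (0 : ℝ) h, HasDerivAt y (V2 (h, (x t, y t))) t := by
    intro t ht
    have hd := hy' t ht
    simp only [hgeq] at hd
    rw [gradient_mod₂ hB g h (x t) (y t)] at hd
    exact hd
  -- confinement
  have conf : ∀ t ∈ Icc (0 : ℝ) h, ‖x t - x₀‖ ≤ M * t ∧ ‖y t - y₀‖ ≤ M * t := by
    refine confine hh.1 hM1 hMh hx0 hy0 hx'' hy'' ?_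
    intro t ht h1 h2
    refine hVbound (h, (x t, y t)) ?_
    refine ⟨⟨hh.1.le, hh1⟩, ⟨?_, ?_⟩⟩
    · rw [Metric.mem_closedBall, dist_eq_norm]; exact h1
    · rw [Metric.mem_closedBall, dist_eq_norm]; exact h2
  have hmemS : ∀ t ∈ Icc (0 : ℝ) h, (h, (x t, y t)) ∈ S := by
    intro t ht
    have c := conf t ht
    have hth : t ≤ h := ht.2
    refine ⟨⟨hh.1.le, hh1⟩, ⟨?_, ?_⟩⟩
    · rw [Metric.mem_closedBall, dist_eq_norm]
      calc ‖x t - x₀‖ ≤ M * t := c.1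
        _ ≤ M * h := by nlinarith
        _ ≤ 1 := le_trans hMh (by norm_num)
    · rw [Metric.mem_closedBall, dist_eq_norm]
      calc ‖y t - y₀‖ ≤ M * t := c.2
        _ ≤ M * h := by nlinarith
        _ ≤ 1 := le_trans hMh (by norm_num)
  have hmemS0 : ((h, ((x₀, y₀) : X × Y)) : ℝ × (X × Y)) ∈ S := by
    refine ⟨⟨hh.1.le, hh1⟩, ⟨?_, ?_⟩⟩ <;> simp
  -- chain rule along the flow
  have hchain : ∀ t ∈ Icc (0 : ℝ) h,
      HasDerivAt (fun s => V1 (h, (x s, y s))) (K1 (h, (x t, y t))) t := by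
    intro t ht
    have hz : HasDerivAt (fun s => (x s, y s))
        (V1 (h, (x t, y t)), V2 (h, (x t, y t))) t := (hx'' t ht).prodMk (hy'' t ht)
    have hGAd : HasFDerivAt (GA A) (fderiv ℝ (GA A) (x t, y t)) (x t, y t) :=
      (((contDiff_GA hA).differentiable (by simp)) _).hasFDerivAt
    have hCCd : HasFDerivAt CC (fderiv ℝ CC (x t, y t)) (x t, y t) :=
      ((hCC.differentiable (by simp)) _).hasFDerivAt
    have hVd : HasFDerivAt (fun p : X × Y => -(GA A p + h • CC p))
        (-(fderiv ℝ (GA A) (x t, y t) + h • fderiv ℝ CC (x t, y t))) (x t, y t) :=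
      (hGAd.add (hCCd.const_smul h)).neg
    have hcomp := hVd.comp_hasDerivAt t hz
    convert hcomp using 1
    all_goals rfl
  -- Taylor expansion bookkeeping
  set a : X := V1 (h, (x₀, y₀)) with hadef
  set r : X := K1 (h, (x₀, y₀)) with hrdef
  set pf : ℝ → X := fun s => V1 (h, (x s, y s)) - a - s • r with hpfdef
  set ψ : ℝ → X := fun s => x s - x₀ - s • a - (s ^ 2 / 2) • r with hψdef
  have hsa : ∀ t : ℝ, HasDerivAt (fun s : ℝ => s • a) a t := fun t => by
    simpa using (hasDerivAt_id t).smul_const a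
  have hsr : ∀ t : ℝ, HasDerivAt (fun s : ℝ => s • r) r t := fun t => by
    simpa using (hasDerivAt_id t).smul_const r
  have hs2r : ∀ t : ℝ, HasDerivAt (fun s : ℝ => (s ^ 2 / 2) • r) (t • r) t := fun t => by
    have hq : HasDerivAt (fun s : ℝ => s ^ 2 / 2) t t := by
      have := (hasDerivAt_pow 2 t).div_const 2
      norm_num at this
      convert this using 1
    simpa using hq.smul_const r
  have hψ' : ∀ t ∈ Icc (0 : ℝ) h, HasDerivAt ψ (pf t) t := by
    intro t ht
    exact (((hx'' t ht).sub_const x₀).sub (hsa t)).sub (hs2r t)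
  have hpf' : ∀ t ∈ Icc (0 : ℝ) h, HasDerivAt pf (K1 (h, (x t, y t)) - r) t := by
    intro t ht
    have h1 := ((hchain t ht).sub_const a).sub (hsr t)
    exact h1
  have hKbnd : ∀ t ∈ Icc (0 : ℝ) h, ‖K1 (h, (x t, y t)) - r‖ ≤ L * (M * h) := by
    intro t ht
    have lip := hKlip (h, (x t, y t)) (hmemS t ht) (h, (x₀, y₀)) hmemS0
    have hnorm : ‖((h, (x t, y t)) : ℝ × (X × Y)) - (h, (x₀, y₀))‖ ≤ M * h := by
      have c := conf t ht
      have : ((h, (x t, y t)) : ℝ × (X × Y)) - (h, (x₀, y₀))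
          = ((0 : ℝ), (x t - x₀, y t - y₀)) := by
        simp [Prod.ext_iff]
      rw [this, Prod.norm_def, Prod.norm_def]
      simp only [norm_zero]
      have hxt : ‖x t - x₀‖ ≤ M * h := le_trans c.1 (by nlinarith [ht.1, ht.2])
      have hyt : ‖y t - y₀‖ ≤ M * h := le_trans c.2 (by nlinarith [ht.1, ht.2])
      have hMh0 : (0 : ℝ) ≤ M * h := mul_nonneg hMpos.le hh.1.le
      simp only [max_le_iff]
      exact ⟨by linarith [le_max_left (0:ℝ) (max ‖x t - x₀‖ ‖y t - y₀‖)],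
        by constructor <;> assumption⟩
    calc ‖K1 (h, (x t, y t)) - r‖ ≤ L * ‖((h, (x t, y t)) : ℝ × (X × Y)) - (h, (x₀, y₀))‖ := lip
      _ ≤ L * (M * h) := by nlinarith
  have hpf0 : pf 0 = 0 := by
    simp [hpfdef, hx0, hy0, hadef]
  have hpfb : ∀ t ∈ Icc (0 : ℝ) h, ‖pf t‖ ≤ (L * (M * h)) * h := by
    intro t ht
    have lip := (convex_Icc (0 : ℝ) h).norm_image_sub_le_of_norm_hasDerivWithin_le
      (fun u hu => (hpf' u hu).hasDerivWithinAt)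
      (fun u hu => hKbnd u hu) ⟨le_refl 0, hh.1.le⟩ ht
    rw [hpf0, sub_zero, sub_zero, Real.norm_eq_abs, abs_of_nonneg ht.1] at lip
    calc ‖pf t‖ ≤ L * (M * h) * t := lip
      _ ≤ L * (M * h) * h := mul_le_mul_of_nonneg_left ht.2
          (mul_nonneg hLnn (mul_nonneg hMpos.le hh.1.le))
  have hψ0 : ψ 0 = 0 := by
    simp [hψdef, hx0]
  have hψb : ‖ψ h‖ ≤ ((L * (M * h)) * h) * h := by
    have lip := (convex_Icc (0 : ℝ) h).norm_image_sub_le_of_norm_hasDerivWithin_le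
      (fun u hu => (hψ' u hu).hasDerivWithinAt)
      (fun u hu => hpfb u hu) ⟨le_refl 0, hh.1.le⟩ ⟨hh.1.le, le_refl h⟩
    rw [hψ0, sub_zero, sub_zero, Real.norm_eq_abs, abs_of_nonneg hh.1.le] at lip
    exact lip
  -- the structure of r
  have hab : ((V1 (h, (x₀, y₀)), V2 (h, (x₀, y₀))) : X × Y)
      = -(((g, k) : X × Y) + h • ((CC (x₀, y₀), CB (x₀, y₀)) : X × Y)) := by
    simp [hV1def, hV2def, Prod.ext_iff, hgdef, hkdef]
  have hreq : r = (2 : ℝ) • CC (x₀, y₀)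
      + h • ((fderiv ℝ (GA A) (x₀, y₀)) (CC (x₀, y₀), CB (x₀, y₀))
        + (fderiv ℝ CC (x₀, y₀)) (((g, k) : X × Y)
            + h • ((CC (x₀, y₀), CB (x₀, y₀)) : X × Y))) := by
    rw [hrdef, hK1def]
    simp only []
    rw [hab]
    rw [map_neg, neg_neg, ContinuousLinearMap.add_apply, map_add, map_smul,
      ContinuousLinearMap.smul_apply, hDGgk]
    rw [smul_add]
    abel
  have hrsub : ‖r - (2 : ℝ) • CC (x₀, y₀)‖ ≤ h * C₂ := by
    have i1 : ‖(fderiv ℝ (GA A) (x₀, y₀)) (CC (x₀, y₀), CB (x₀, y₀))‖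
        ≤ ‖fderiv ℝ (GA A) (x₀, y₀)‖ * ‖((CC (x₀, y₀), CB (x₀, y₀)) : X × Y)‖ :=
      ContinuousLinearMap.le_opNorm _ _
    have j1 : ‖((g, k) : X × Y) + h • ((CC (x₀, y₀), CB (x₀, y₀)) : X × Y)‖
        ≤ ‖((g, k) : X × Y)‖ + ‖((CC (x₀, y₀), CB (x₀, y₀)) : X × Y)‖ := by
      refine le_trans (norm_add_le _ _) ?_
      rw [norm_smul, Real.norm_eq_abs, abs_of_nonneg hh.1.le]
      exact add_le_add (le_refl _) (mul_le_of_le_one_left (norm_nonneg _) hh1)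
    have i2 : ‖(fderiv ℝ CC (x₀, y₀)) (((g, k) : X × Y)
          + h • ((CC (x₀, y₀), CB (x₀, y₀)) : X × Y))‖
        ≤ ‖fderiv ℝ CC (x₀, y₀)‖
            * (‖((g, k) : X × Y)‖ + ‖((CC (x₀, y₀), CB (x₀, y₀)) : X × Y)‖) :=
      le_trans (ContinuousLinearMap.le_opNorm _ _)
        (mul_le_mul_of_nonneg_left j1 (norm_nonneg _))
    rw [hreq, add_sub_cancel_left, norm_smul, Real.norm_eq_abs, abs_of_nonneg hh.1.le]
    refine mul_le_mul_of_nonneg_left ?_ hh.1.le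
    refine le_trans (norm_add_le _ _) ?_
    exact add_le_add i1 i2
  -- final algebra
  have ha' : a = -(g + h • CC (x₀, y₀)) := by
    simp [hadef, hV1def, hgdef]
  have hfinal : x h - (x₀ - h • g)
      = ψ h + (h ^ 2 / 2) • (r - (2 : ℝ) • CC (x₀, y₀)) := by
    simp only [hψdef]
    rw [ha']
    module
  rw [hgeq, hfinal]
  have hb1 : ‖ψ h + (h ^ 2 / 2) • (r - (2 : ℝ) • CC (x₀, y₀))‖
      ≤ ‖ψ h‖ + (h ^ 2 / 2) * ‖r - (2 : ℝ) • CC (x₀, y₀)‖ := by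
    refine le_trans (norm_add_le _ _) ?_
    rw [norm_smul, Real.norm_eq_abs, abs_of_nonneg (by positivity)]
  have hh0 := hh.1
  calc ‖ψ h + (h ^ 2 / 2) • (r - (2 : ℝ) • CC (x₀, y₀))‖
      ≤ ‖ψ h‖ + (h ^ 2 / 2) * ‖r - (2 : ℝ) • CC (x₀, y₀)‖ := hb1
    _ ≤ ((L * (M * h)) * h) * h + (h ^ 2 / 2) * (h * C₂) := by
        exact add_le_add hψb (mul_le_mul_of_nonneg_left hrsub
          (by positivity : (0 : ℝ) ≤ h ^ 2 / 2))
    _ ≤ (L * M + C₂ / 2 + 1) * h ^ 3 := by nlinarith [pow_pos hh0 3]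


end Master

end SimGD


/-- A simultaneous gradient descent step in a differentiable two-player game
follows the gradient flow of the iteration-dependent modified losses with
error `O(h³)`. -/
theorem simultaneous_gd_follows_modified_losses {m n : ℕ}
    (Eφ Eθ : EuclideanSpace ℝ (Fin m) × EuclideanSpace ℝ (Fin n) → ℝ)
    (hEφ : ContDiff ℝ (⊤ : ℕ∞) Eφ) (hEθ : ContDiff ℝ (⊤ : ℕ∞) Eθ)
    (φ₀ : EuclideanSpace ℝ (Fin m)) (θ₀ : EuclideanSpace ℝ (Fin n)) :
    ∃ C > (0 : ℝ), ∃ h₀ > (0 : ℝ), ∀ h ∈ Set.Ioo (0 : ℝ) h₀,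
      ∀ (φ : ℝ → EuclideanSpace ℝ (Fin m)) (θ : ℝ → EuclideanSpace ℝ (Fin n)),
        φ 0 = φ₀ → θ 0 = θ₀ →
        (∀ t ∈ Set.Icc (0 : ℝ) h,
          HasDerivAt φ
            (-(gradient (fun x => modLossφ Eφ Eθ φ₀ θ₀ h x (θ t)) (φ t))) t) →
        (∀ t ∈ Set.Icc (0 : ℝ) h,
          HasDerivAt θ
            (-(gradient (fun y => modLossθ Eφ Eθ φ₀ θ₀ h (φ t) y) (θ t))) t) →
        ‖φ h - (φ₀ - h • grad₁ Eφ φ₀ θ₀)‖ ≤ C * h ^ 3 ∧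
          ‖θ h - (θ₀ - h • grad₂ Eθ φ₀ θ₀)‖ ≤ C * h ^ 3 := by
  obtain ⟨C₁, hC₁, h₁, hh₁, H₁⟩ := SimGD.master Eφ Eθ hEφ hEθ φ₀ θ₀
  have hEθ' : ContDiff ℝ (⊤ : ℕ∞) (fun p : EuclideanSpace ℝ (Fin n) × EuclideanSpace ℝ (Fin m) =>
      Eθ (p.2, p.1)) := hEθ.comp (contDiff_snd.prodMk contDiff_fst)
  have hEφ' : ContDiff ℝ (⊤ : ℕ∞) (fun p : EuclideanSpace ℝ (Fin n) × EuclideanSpace ℝ (Fin m) =>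
      Eφ (p.2, p.1)) := hEφ.comp (contDiff_snd.prodMk contDiff_fst)
  obtain ⟨C₂, hC₂, h₂, hh₂, H₂⟩ := SimGD.master
    (fun p : EuclideanSpace ℝ (Fin n) × EuclideanSpace ℝ (Fin m) => Eθ (p.2, p.1))
    (fun p : EuclideanSpace ℝ (Fin n) × EuclideanSpace ℝ (Fin m) => Eφ (p.2, p.1))
    hEθ' hEφ' θ₀ φ₀
  refine ⟨max C₁ C₂, lt_of_lt_of_le hC₁ (le_max_left _ _), min h₁ h₂, lt_min hh₁ hh₂, ?_⟩
  intro h hh φ θ hφ0 hθ0 hφ' hθ'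
  have hpow : (0 : ℝ) ≤ h ^ 3 := pow_nonneg hh.1.le 3
  constructor
  · have b1 := H₁ h ⟨hh.1, lt_of_lt_of_le hh.2 (min_le_left _ _)⟩ φ θ hφ0 hθ0
      (fun t ht => hφ' t ht) (fun t ht => hθ' t ht)
    exact le_trans b1 (mul_le_mul_of_nonneg_right (le_max_left _ _) hpow)
  · have b2 := H₂ h ⟨hh.1, lt_of_lt_of_le hh.2 (min_le_right _ _)⟩ θ φ hθ0 hφ0
      (fun t ht => hθ' t ht) (fun t ht => hφ' t ht)
    exact le_trans b2 (mul_le_mul_of_nonneg_right (le_max_right _ _) hpow)
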